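/- Let M be a mixed multigraph with an admissible partition V(M) = V_1 ∪ V_ω ∪ V_{ω²} ∪ V_{ω³} ∪ V_{ω⁴} ∪ V_{ω⁵} (meaning: for each j ∈ {ω^i : 0 ≤ i ≤ 5}, there are no arcs from V_j to V_{ωj}; there are no edges at all between V_j and V_{ω³j}; and all edges between V_j and V_{ω⁴j} are arcs directed from V_j to V_{ω⁴j}). Let M' be obtained from M by the three-way switching with respect to this partition: replace each undirected edge between V_j and V_{ωj} by an arc from V_j to V_{ωj}; replace each arc from V_j to V_{ω⁵j} by an undirected edge; and reverse all arcs from V_j to V_{ω⁴j}. Then M' is cospectral with M. -/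

import Mathlib

open Complex Finset

noncomputable section

/-- The primitive sixth root of unity `ω = 1/2 + (√3/2)i`. -/
def omega6 : ℂ := ⟨1/2, Real.sqrt 3 / 2⟩

/-- A loopless undirected multigraph with vertex type `V` and edge type `E`:
each edge has a pair of distinct endpoints. -/
structure Multigraph (V E : Type) where
  ends : E → Sym2 V
  loopless : ∀ e, ¬ (ends e).IsDiag

variable {V E : Type}

/-- A mixed multigraph with underlying multigraph `G`: each edge is either
unoriented (`none`) or oriented (`some (u, v)`, an arc from `u` to `v`),
the orientation is compatible with the endpoints, and there are no digons
(two parallel edges oriented in opposite directions). -/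
structure MixedOrientation (G : Multigraph V E) where
  orient : E → Option (V × V)
  compat : ∀ e a b, orient e = some (a, b) → G.ends e = s(a, b)
  noDigon : ∀ e f a b, G.ends e = G.ends f → orient e = some (a, b) → orient f ≠ some (b, a)

/-- The underlying graph of `G`, viewed as the mixed multigraph with no oriented edges. -/
def Multigraph.triv (G : Multigraph V E) : MixedOrientation G where
  orient := fun _ => none
  compat := fun _ _ _ h => by simp at h
  noDigon := fun _ _ _ _ _ h => by simp at h

variable [DecidableEq V]

/-- The contribution of edge `e`, traversed from `u` to `v`, to the Hermitian adjacency
matrix entry `N_{uv}` and to walk weights: `1` if `e` is unoriented, `ω` if `e` is an arc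
from `u` to `v`, and `conj ω` if `e` is an arc from `v` to `u`. -/
def stepWeight {G : Multigraph V E} (M : MixedOrientation G) (e : E) (u v : V) : ℂ :=
  match M.orient e with
  | none => 1
  | some (a, _) => if a = u then omega6 else (starRingEnd ℂ) omega6

/-- The Hermitian adjacency matrix `N(M)` of a mixed multigraph:
`N_{uv} = e{u,v} + e(u,v)·ω + e(v,u)·conj ω`. -/
def herm [Fintype V] [Fintype E] {G : Multigraph V E} (M : MixedOrientation G) :
    Matrix V V ℂ :=
  Matrix.of fun u v => ∑ e : E, if G.ends e = s(u, v) then stepWeight M e u v else 0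

/-- A (mixed) cycle in the multigraph `G`: a cyclic sequence of `n ≥ 2` distinct vertices
joined by `n` distinct edges. -/
structure MixedCycle (G : Multigraph V E) where
  n : ℕ
  two_le : 2 ≤ n
  vert : ZMod n → V
  edge : ZMod n → E
  vert_inj : Function.Injective vert
  edge_inj : Function.Injective edge
  ends_eq : ∀ i, G.ends (edge i) = s(vert i, vert (i + 1))

/-- The weight `wt(C) = ω^f · (conj ω)^b` of a mixed cycle `C` in `M`, traversed in
the direction given by its parametrization. -/
def cycleWeight {G : Multigraph V E} (M : MixedOrientation G) (C : MixedCycle G) : ℂ :=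
  haveI : NeZero C.n := ⟨by have := C.two_le; omega⟩
  ∏ i : ZMod C.n, stepWeight M (C.edge i) (C.vert i) (C.vert (i + 1))

/-- The value `ν(C) = wt(C) + conj (wt(C))` of a mixed cycle. -/
def nu {G : Multigraph V E} (M : MixedOrientation G) (C : MixedCycle G) : ℂ :=
  cycleWeight M C + (starRingEnd ℂ) (cycleWeight M C)

/-- The number of forward arcs of a mixed cycle (relative to its direction). -/
def fCount {G : Multigraph V E} (M : MixedOrientation G) (C : MixedCycle G) : ℕ :=
  haveI : NeZero C.n := ⟨by have := C.two_le; omega⟩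
  (Finset.univ.filter fun i : ZMod C.n =>
    M.orient (C.edge i) = some (C.vert i, C.vert (i + 1))).card

/-- The number of backward arcs of a mixed cycle (relative to its direction). -/
def bCount {G : Multigraph V E} (M : MixedOrientation G) (C : MixedCycle G) : ℕ :=
  haveI : NeZero C.n := ⟨by have := C.two_le; omega⟩
  (Finset.univ.filter fun i : ZMod C.n =>
    M.orient (C.edge i) = some (C.vert (i + 1), C.vert i)).card

/-- The edge set of a mixed cycle. -/
def cycleEdges [DecidableEq E] {G : Multigraph V E} (C : MixedCycle G) : Finset E :=
  haveI : NeZero C.n := ⟨by have := C.two_le; omega⟩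
  Finset.image C.edge Finset.univ

/-- Reachability in `G` using only edges from the set `S`. -/
def ReachIn (G : Multigraph V E) (S : Set E) (u v : V) : Prop :=
  Relation.ReflTransGen (fun x y => ∃ e ∈ S, G.ends e = s(x, y)) u v

/-- A multigraph is connected if every two vertices are joined by a walk. -/
def Multigraph.Connected (G : Multigraph V E) : Prop :=
  ∀ u v : V, ReachIn G Set.univ u v

/-- All entries of the diagonal `d` are sixth roots of unity `ω^i`, `0 ≤ i ≤ 5`. -/
def IsSixthRoots (d : V → ℂ) : Prop := ∀ v, ∃ i : ℕ, i ≤ 5 ∧ d v = omega6 ^ i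

/-- `M''` is obtained from `M'` by a three-way switching: `N(M'') = D⁻¹ N(M') D` for
some diagonal matrix `D` whose diagonal entries are sixth roots of unity. -/
def Switching [Fintype V] [Fintype E] {G : Multigraph V E}
    (M' M'' : MixedOrientation G) : Prop :=
  ∃ d : V → ℂ, IsSixthRoots d ∧
    herm M'' = (Matrix.diagonal d)⁻¹ * herm M' * Matrix.diagonal d

/-- `M'` is the converse of `M`: every arc of `M` is reversed. -/
def IsConverse {G : Multigraph V E} (M M' : MixedOrientation G) : Prop :=
  ∀ e, M'.orient e = Option.map Prod.swap (M.orient e)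

/-- `M'` and `M''` are switching equivalent: one is obtained from the other by a
three-way switching and/or taking a converse. -/
def SwitchEquiv [Fintype V] [Fintype E] {G : Multigraph V E}
    (M' M'' : MixedOrientation G) : Prop :=
  Switching M' M'' ∨ ∃ Mc : MixedOrientation G, IsConverse M' Mc ∧ Switching Mc M''

/-- `T` is (the edge set of) a spanning tree of `G`: it connects all vertices and
contains no cycle. -/
def IsSpanningTree (G : Multigraph V E) (T : Set E) : Prop :=
  (∀ u v : V, ReachIn G T u v) ∧ ∀ C : MixedCycle G, ¬ (∀ i, C.edge i ∈ T)

/-- `C` is a fundamental cycle with respect to the spanning tree `T`: it uses exactly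
one non-tree edge. -/
def IsFundamentalCycle (G : Multigraph V E) (T : Set E) (C : MixedCycle G) : Prop :=
  ∃ e, e ∉ T ∧ ∀ i, C.edge i = e ∨ C.edge i ∈ T

/-!
Let `p v = ω^k p u` for an edge `uv`. Admissibility rules out `k = 3`, arcs with `k = 1`,
and every edge with `k = 4` that is not an arc `u → v`. In each case that remains, the
switching multiplies the weight of the traversal `u → v` by exactly `ω^k`. Hence
`diag(p) N(M') = N(M) diag(p)`, so `N(M')` and `N(M)` are similar matrices.
-/

theorem omega6_sq_sub_omega6_add_one : omega6 ^ 2 - omega6 + 1 = 0 := by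
  have h3 : Real.sqrt 3 * Real.sqrt 3 = 3 := Real.mul_self_sqrt (by norm_num)
  apply Complex.ext <;> simp [omega6, pow_two] <;> nlinarith [h3]

theorem isPrimitiveRoot_omega6 : IsPrimitiveRoot omega6 6 := by
  rw [← Polynomial.isRoot_cyclotomic_iff, Polynomial.cyclotomic_six]
  simpa using omega6_sq_sub_omega6_add_one

theorem omega6_pow_six : omega6 ^ 6 = 1 := isPrimitiveRoot_omega6.pow_eq_one

theorem conj_omega6 : starRingEnd ℂ omega6 = omega6 ^ 5 := by
  rw [← Complex.inv_eq_conj (isPrimitiveRoot_omega6.norm'_eq_one (by norm_num))]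
  refine inv_eq_of_mul_eq_one_right ?_
  rw [← pow_succ', omega6_pow_six]

theorem exists_eq_omega6_pow_mul {x y : ℂ} (hx : x ^ 6 = 1) (hy : y ^ 6 = 1) :
    ∃ k < 6, y = omega6 ^ k * x := by
  have hx0 : x ≠ 0 := by rintro rfl; simp at hx
  obtain ⟨k, hk6, hk⟩ := isPrimitiveRoot_omega6.eq_pow_of_pow_eq_one (ξ := y / x)
    (by rw [div_pow, hx, hy, div_one])
  exact ⟨k, hk6, by rw [hk, div_mul_cancel₀ y hx0]⟩

theorem eq_omega6_pow_sub_mul {x y : ℂ} {k : ℕ} (h : y = omega6 ^ k * x) (hk : k ≤ 6) :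
    x = omega6 ^ (6 - k) * y := by
  rw [h, ← mul_assoc, ← pow_add, Nat.sub_add_cancel hk, omega6_pow_six, one_mul]

theorem Matrix.charpoly_eq_of_mul_eq_mul {n R : Type*} [Fintype n] [DecidableEq n] [CommRing R]
    {A B D : Matrix n n R} (hD : IsUnit D) (h : D * A = B * D) : A.charpoly = B.charpoly := by
  obtain ⟨D, rfl⟩ := hD
  rw [← Matrix.charpoly_units_conj' D B, mul_assoc, ← h, ← mul_assoc,
    Matrix.nonsing_inv_mul _ ((Matrix.isUnit_iff_isUnit_det _).mp D.isUnit), one_mul]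

section

omit [DecidableEq V]

namespace IsSixthRoots

variable {d : V → ℂ}

theorem pow_six_eq_one (hd : IsSixthRoots d) (v : V) : d v ^ 6 = 1 := by
  obtain ⟨i, -, hi⟩ := hd v
  rw [hi, ← pow_mul, mul_comm, pow_mul, omega6_pow_six, one_pow]

theorem ne_zero (hd : IsSixthRoots d) (v : V) : d v ≠ 0 :=
  ne_zero_pow (by norm_num) ((hd.pow_six_eq_one v).symm ▸ one_ne_zero)

theorem conj_eq_inv (hd : IsSixthRoots d) (v : V) : starRingEnd ℂ (d v) = (d v)⁻¹ :=
  (Complex.inv_eq_conj (Complex.norm_eq_one_of_pow_eq_one (hd.pow_six_eq_one v) (by norm_num))).symm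

end IsSixthRoots

variable {G : Multigraph V E}

theorem Multigraph.ne_of_ends_eq (G : Multigraph V E) {e : E} {u v : V}
    (he : G.ends e = s(u, v)) : u ≠ v := fun huv =>
  G.loopless e (by rw [he, huv, Sym2.mk_isDiag_iff])

theorem MixedOrientation.orient_eq_cases (M : MixedOrientation G) {e : E} {u v : V}
    (he : G.ends e = s(u, v)) :
    M.orient e = none ∨ M.orient e = some (u, v) ∨ M.orient e = some (v, u) := by
  rcases ho : M.orient e with _ | ⟨a, b⟩
  · exact Or.inl rfl
  · rcases Sym2.eq_iff.mp ((M.compat e a b ho).symm.trans he) with ⟨rfl, rfl⟩ | ⟨rfl, rfl⟩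
    · exact Or.inr (Or.inl rfl)
    · exact Or.inr (Or.inr rfl)

structure IsAdmissible (M : MixedOrientation G) (p : V → ℂ) : Prop where
  no_arc_omega6 : ∀ e u v, M.orient e = some (u, v) → p v ≠ omega6 * p u
  no_edge_omega6_pow_three : ∀ e u v, G.ends e = s(u, v) → p v ≠ omega6 ^ 3 * p u
  arc_of_omega6_pow_four : ∀ e u v, G.ends e = s(u, v) →
    p v = omega6 ^ 4 * p u → M.orient e = some (u, v)

structure IsThreeWaySwitch (M M' : MixedOrientation G) (p : V → ℂ) : Prop where
  none_to_arc : ∀ e u v, G.ends e = s(u, v) → M.orient e = none →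
    p v = omega6 * p u → M'.orient e = some (u, v)
  none_to_none : ∀ e u v, G.ends e = s(u, v) → M.orient e = none →
    p v ≠ omega6 * p u → p u ≠ omega6 * p v → M'.orient e = none
  arc_to_none : ∀ e u v, M.orient e = some (u, v) →
    p v = omega6 ^ 5 * p u → M'.orient e = none
  arc_to_reverse : ∀ e u v, M.orient e = some (u, v) →
    p v = omega6 ^ 4 * p u → M'.orient e = some (v, u)
  arc_to_arc : ∀ e u v, M.orient e = some (u, v) → p v ≠ omega6 ^ 5 * p u →
    p v ≠ omega6 ^ 4 * p u → M'.orient e = some (u, v)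

end

section StepWeight

variable {G : Multigraph V E} (M : MixedOrientation G) {e : E} {u v : V}

theorem stepWeight_of_orient_eq_none (h : M.orient e = none) : stepWeight M e u v = 1 := by
  simp [stepWeight, h]

theorem stepWeight_of_orient_eq_forward (h : M.orient e = some (u, v)) :
    stepWeight M e u v = omega6 := by
  simp [stepWeight, h]

theorem stepWeight_of_orient_eq_backward (huv : u ≠ v) (h : M.orient e = some (v, u)) :
    stepWeight M e u v = starRingEnd ℂ omega6 := by
  simp [stepWeight, h, huv.symm]

theorem stepWeight_swap (he : G.ends e = s(u, v)) :
    stepWeight M e v u = starRingEnd ℂ (stepWeight M e u v) := by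
  have huv := G.ne_of_ends_eq he
  rcases M.orient_eq_cases he with h | h | h
  · simp [stepWeight_of_orient_eq_none M h]
  · rw [stepWeight_of_orient_eq_forward M h, stepWeight_of_orient_eq_backward M huv.symm h]
  · rw [stepWeight_of_orient_eq_forward M h, stepWeight_of_orient_eq_backward M huv h,
      Complex.conj_conj]

end StepWeight

section Switch

variable {G : Multigraph V E} {M M' : MixedOrientation G} {p : V → ℂ} {e : E} {u v : V}

theorem mul_stepWeight_swap (hp : IsSixthRoots p) (he : G.ends e = s(u, v))
    (h : p u * stepWeight M' e u v = stepWeight M e u v * p v) :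
    p v * stepWeight M' e v u = stepWeight M e v u * p u := by
  have hconj := congrArg (starRingEnd ℂ) h
  simp only [map_mul, hp.conj_eq_inv] at hconj
  rw [stepWeight_swap M' he, stepWeight_swap M he]
  have hu := hp.ne_zero u
  have hv := hp.ne_zero v
  field_simp at hconj
  linear_combination hconj

namespace IsThreeWaySwitch

theorem mul_stepWeight_of_le_three (hsw : IsThreeWaySwitch M M' p) (hadm : IsAdmissible M p)
    (he : G.ends e = s(u, v)) (hu : p u ≠ 0) {k : ℕ} (hk : p v = omega6 ^ k * p u)
    (hk3 : k ≤ 3) : p u * stepWeight M' e u v = stepWeight M e u v * p v := by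
  have huv := G.ne_of_ends_eq he
  have he' : G.ends e = s(v, u) := he.trans Sym2.eq_swap
  have hne : ∀ m, m ≠ 0 → m < 6 → p u ≠ omega6 ^ m * p u := fun m h0 h6 h =>
    isPrimitiveRoot_omega6.pow_ne_one_of_pos_of_lt h0 h6
      (mul_right_cancel₀ hu (by rw [one_mul, ← h]))
  rcases hk3.eq_or_lt with rfl | hk3
  · exact absurd hk (hadm.no_edge_omega6_pow_three e u v he)
  rcases M.orient_eq_cases he with ho | ho | ho <;> interval_cases k
  · have hpuv : p v = p u := by simpa using hk
    rw [stepWeight_of_orient_eq_none M ho, stepWeight_of_orient_eq_none M'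
      (hsw.none_to_none e u v he ho (by simpa [hpuv] using hne 1) (by simpa [hpuv] using hne 1)),
      hpuv, mul_one, one_mul]
  · rw [stepWeight_of_orient_eq_none M ho,
      stepWeight_of_orient_eq_forward M' (hsw.none_to_arc e u v he ho (by simpa using hk))]
    linear_combination -hk
  · have := hadm.arc_of_omega6_pow_four e v u he'
      (by linear_combination -omega6 ^ 4 * hk - p u * omega6_pow_six)
    simp [ho] at this
  · have hpuv : p v = p u := by simpa using hk
    rw [stepWeight_of_orient_eq_forward M ho, stepWeight_of_orient_eq_forward M'
      (hsw.arc_to_arc e u v ho (by simpa [hpuv] using hne 5) (by simpa [hpuv] using hne 4)),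
      hpuv, mul_comm]
  · exact absurd (by simpa using hk) (hadm.no_arc_omega6 e u v ho)
  · have := hadm.arc_of_omega6_pow_four e v u he'
      (by linear_combination -omega6 ^ 4 * hk - p u * omega6_pow_six)
    simp [ho, huv] at this
  · have hpuv : p v = p u := by simpa using hk
    rw [stepWeight_of_orient_eq_backward M huv ho, stepWeight_of_orient_eq_backward M' huv
      (hsw.arc_to_arc e v u ho (by simpa [hpuv] using hne 5) (by simpa [hpuv] using hne 4)),
      hpuv, mul_comm]
  · rw [stepWeight_of_orient_eq_backward M huv ho, stepWeight_of_orient_eq_none M'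
      (hsw.arc_to_none e v u ho (by linear_combination -omega6 ^ 5 * hk - p u * omega6_pow_six)),
      conj_omega6]
    linear_combination -omega6 ^ 5 * hk - p u * omega6_pow_six
  · rw [stepWeight_of_orient_eq_backward M huv ho, stepWeight_of_orient_eq_forward M'
      (hsw.arc_to_reverse e v u ho (by linear_combination -omega6 ^ 4 * hk - p u * omega6_pow_six)),
      conj_omega6]
    linear_combination -omega6 ^ 5 * hk - omega6 * p u * omega6_pow_six

theorem mul_stepWeight (hsw : IsThreeWaySwitch M M' p) (hadm : IsAdmissible M p)
    (hp : IsSixthRoots p) (he : G.ends e = s(u, v)) :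
    p u * stepWeight M' e u v = stepWeight M e u v * p v := by
  obtain ⟨k, hk6, hk⟩ := exists_eq_omega6_pow_mul (hp.pow_six_eq_one u) (hp.pow_six_eq_one v)
  rcases le_or_gt k 3 with hk3 | hk3
  · exact hsw.mul_stepWeight_of_le_three hadm he (hp.ne_zero u) hk hk3
  · refine mul_stepWeight_swap hp (he.trans Sym2.eq_swap) ?_
    exact hsw.mul_stepWeight_of_le_three hadm (he.trans Sym2.eq_swap) (hp.ne_zero v)
      (eq_omega6_pow_sub_mul hk hk6.le) (by omega)

end IsThreeWaySwitch

end Switch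

theorem diagonal_mul_herm_eq_herm_mul_diagonal [Fintype V] [Fintype E] {G : Multigraph V E}
    {M M' : MixedOrientation G} {d : V → ℂ}
    (h : ∀ e u v, G.ends e = s(u, v) → d u * stepWeight M' e u v = stepWeight M e u v * d v) :
    Matrix.diagonal d * herm M' = herm M * Matrix.diagonal d := by
  ext u v
  simp only [Matrix.diagonal_mul, Matrix.mul_diagonal, herm, Matrix.of_apply, Finset.mul_sum,
    Finset.sum_mul]
  refine Finset.sum_congr rfl fun e _ => ?_
  split_ifs with he
  · exact h e u v he
  · simp

/-- The partition is encoded by `p`, with `V_j = p⁻¹(j)`. -/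
theorem admissible_switching_cospectral [Fintype V] [Fintype E] {G : Multigraph V E}
    (M M' : MixedOrientation G) (p : V → ℂ) (hp : IsSixthRoots p)
    -- admissibility of the partition:
    -- (1) no arcs from `V_j` to `V_{ωj}`
    (adm1 : ∀ e u v, M.orient e = some (u, v) → p v ≠ omega6 * p u)
    -- (2) no edges at all between `V_j` and `V_{ω³j}`
    (adm2 : ∀ e u v, G.ends e = s(u, v) → p v ≠ omega6 ^ 3 * p u)
    -- (3) all edges between `V_j` and `V_{ω⁴j}` are arcs from `V_j` to `V_{ω⁴j}`
    (adm3 : ∀ e u v, G.ends e = s(u, v) → p v = omega6 ^ 4 * p u →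
      M.orient e = some (u, v))
    -- `M'` is obtained from `M` by the three-way switching w.r.t. the partition:
    -- undirected edges between `V_j` and `V_{ωj}` become arcs from `V_j` to `V_{ωj}`
    (h1 : ∀ e u v, G.ends e = s(u, v) → M.orient e = none → p v = omega6 * p u →
      M'.orient e = some (u, v))
    -- all other undirected edges stay undirected
    (h2 : ∀ e u v, G.ends e = s(u, v) → M.orient e = none →
      p v ≠ omega6 * p u → p u ≠ omega6 * p v → M'.orient e = none)
    -- arcs from `V_j` to `V_{ω⁵j}` become undirected edges
    (h3 : ∀ e u v, M.orient e = some (u, v) → p v = omega6 ^ 5 * p u →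
      M'.orient e = none)
    -- arcs from `V_j` to `V_{ω⁴j}` are reversed
    (h4 : ∀ e u v, M.orient e = some (u, v) → p v = omega6 ^ 4 * p u →
      M'.orient e = some (v, u))
    -- all other arcs are unchanged
    (h5 : ∀ e u v, M.orient e = some (u, v) → p v ≠ omega6 ^ 5 * p u →
      p v ≠ omega6 ^ 4 * p u → M'.orient e = some (u, v)) :
    (herm M').charpoly = (herm M).charpoly := by
  have hsw : IsThreeWaySwitch M M' p := ⟨h1, h2, h3, h4, h5⟩
  have hD : IsUnit (Matrix.diagonal p) :=
    Matrix.isUnit_diagonal.mpr (Pi.isUnit_iff.mpr fun v => (hp.ne_zero v).isUnit)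
  exact Matrix.charpoly_eq_of_mul_eq_mul hD <| diagonal_mul_herm_eq_herm_mul_diagonal
    fun _ _ _ he => hsw.mul_stepWeight ⟨adm1, adm2, adm3⟩ hp he

end
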